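/- arXiv:2001.06730 — 8 statements merged into one kernel-verified Lean document; each statement's English description precedes it below -/
import Mathlib

section
/- For any groups G and H, any group homomorphisms φ₁, …, φ_k : G → H (k ≥ 2), and any permutation σ of the index set {1, …, k}, the Reidemeister numbers satisfy R(φ₁, …, φ_k) = R(φ_{σ(1)}, …, φ_{σ(k)}). -/
/-- The relation on `(k-1)`-tuples (here `k = m+1`) defining the Reidemeister classes of a
family of homomorphisms `φ₁, …, φ_k : G → H`:  `(α₂,…,α_k) ∼ (β₂,…,β_k)` iff there is `z : G`
with `β_i = φ₁(z) * α_i * φ_i(z)⁻¹` for all `i = 2,…,k`.  The family is indexed by `Fin (m+1)`,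
with `φ 0` playing the distinguished role of `φ₁` and the tuples indexed by `Fin m`. -/
def mRel {G H : Type*} [Group G] [Group H] {m : ℕ} (φ : Fin (m + 1) → (G →* H))
    (α β : Fin m → H) : Prop :=
  ∃ z : G, ∀ i : Fin m, β i = φ 0 z * α i * (φ i.succ z)⁻¹

/-- The Reidemeister set `𝓡(φ₁,…,φ_k)` of a family of homomorphisms: the quotient of
`H^{k-1}` by the relation `mRel`. -/
def ReidSetM {G H : Type*} [Group G] [Group H] {m : ℕ} (φ : Fin (m + 1) → (G →* H)) :
    Type _ :=
  Quot (mRel φ)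

/-!
The Reidemeister set of `φ : Fin (m + 1) → G →* H` is the orbit set of `G × H` acting on
full tuples `A : Fin (m + 1) → H` by `(z, h) • A = fun i => h * A i * (φ i z)⁻¹`: the action
of `h` normalizes `A 0 = 1`, and the remaining coordinates `(A 0)⁻¹ * A i.succ` form a tuple
indexed by `Fin m`. The orbit description treats all indices alike, so it is invariant under
reindexing the family.
-/

section

variable {G H : Type*} [Group G] [Group H]

def fullTupleRel {ι : Type*} (φ : ι → G →* H) (A B : ι → H) : Prop :=
  ∃ z : G, ∃ h : H, ∀ i, B i = h * A i * (φ i z)⁻¹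

def fullTupleQuotCongr {ι κ : Type*} (φ : ι → G →* H) (e : κ ≃ ι) :
    Quot (fullTupleRel φ) ≃ Quot (fullTupleRel (φ ∘ e)) :=
  Quot.congr (e.arrowCongr (Equiv.refl H)).symm fun _ _ =>
    exists_congr fun _ => exists_congr fun _ => e.symm.forall_congr_left

def reidSetMEquivFullTupleQuot {m : ℕ} (φ : Fin (m + 1) → G →* H) :
    ReidSetM φ ≃ Quot (fullTupleRel φ) where
  toFun := Quot.map (fun α => Fin.cons 1 α) <| by
    rintro α β ⟨z, hz⟩
    refine ⟨z, φ 0 z, Fin.cases ?_ fun i => ?_⟩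
    · simp
    · simpa using hz i
  invFun := Quot.map (fun A i => (A 0)⁻¹ * A i.succ) <| by
    rintro A B ⟨z, h, hz⟩
    refine ⟨z, fun i => ?_⟩
    dsimp only
    rw [hz i.succ, hz 0]
    group
  left_inv := Quot.ind fun α => congrArg (Quot.mk _) <| funext fun i => by simp
  right_inv := Quot.ind fun A =>
    Quot.sound ⟨1, A 0, Fin.cases (by simp) fun i => by simp⟩

end

theorem reidemeister_number_perm_invariant_general {G H : Type*} [Group G] [Group H] {m : ℕ}
    (φ : Fin (m + 1) → (G →* H)) (σ : Equiv.Perm (Fin (m + 1))) :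
    ENat.card (ReidSetM φ) = ENat.card (ReidSetM (φ ∘ σ)) :=
  ENat.card_congr <| (reidSetMEquivFullTupleQuot φ).trans <|
    (fullTupleQuotCongr φ σ).trans (reidSetMEquivFullTupleQuot (φ ∘ σ)).symm

/-- For any groups `G` and `H`, any homomorphisms `φ₁, …, φ_k : G → H` (`k = m + 1 ≥ 2`) and
any permutation `σ` of the index set, the Reidemeister numbers (as elements of `ℕ∞`, i.e.
natural numbers or `∞`) satisfy `R(φ₁,…,φ_k) = R(φ_{σ(1)},…,φ_{σ(k)})`. -/
theorem reidemeister_number_perm_invariant {G H : Type*} [Group G] [Group H] {m : ℕ}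
    (hm : 1 ≤ m) (φ : Fin (m + 1) → (G →* H)) (σ : Equiv.Perm (Fin (m + 1))) :
    ENat.card (ReidSetM φ) = ENat.card (ReidSetM (φ ∘ σ)) :=
  reidemeister_number_perm_invariant_general φ σ
end

section
/- Let φ₁, φ₂, φ₃ : ℤ² → ℤ be group homomorphisms. If R(φ₁, φ₂, φ₃) < ∞ then R(φ₁, φ₂) < ∞, R(φ₁, φ₃) < ∞, and the product R(φ₁, φ₂)·R(φ₁, φ₃) divides R(φ₁, φ₂, φ₃). -/
/-- The (additive) twisted conjugacy relation on `A` determined by a pair of homomorphisms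
`φ ψ : G →+ A`:  `α ∼ β` iff `β = φ(z) + α - ψ(z)` for some `z : G`. -/
def tcRelAdd {G A : Type*} [AddGroup G] [AddGroup A] (φ ψ : G →+ A) (α β : A) : Prop :=
  ∃ z : G, β = φ z + α - ψ z

/-- The relation on pairs defining the Reidemeister classes of a triple of homomorphisms
`φ₁ φ₂ φ₃ : G →+ A`:  `(α₂, α₃) ∼ (β₂, β₃)` iff there is `z : G` with
`β₂ = φ₁(z) + α₂ - φ₂(z)` and `β₃ = φ₁(z) + α₃ - φ₃(z)`. -/
def tcRel₃Add {G A : Type*} [AddGroup G] [AddGroup A] (φ₁ φ₂ φ₃ : G →+ A)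
    (a b : A × A) : Prop :=
  ∃ z : G, b.1 = φ₁ z + a.1 - φ₂ z ∧ b.2 = φ₁ z + a.2 - φ₃ z

/-!
For an abelian target `A`, the twisted conjugacy classes of `φ, ψ : G → A` are the cosets of
the range of `φ - ψ`, so `R(φ, ψ)` is the index of that range. The Reidemeister classes of the
triple are the twisted conjugacy classes of the pair of maps `z ↦ (φ₁ z, φ₁ z)` and
`z ↦ (φ₂ z, φ₃ z)` into `A × A`, whose difference has range contained in
`range (φ₁ - φ₂) × range (φ₁ - φ₃)`. That product has index `R(φ₁, φ₂) · R(φ₁, φ₃)`, which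
therefore divides `R(φ₁, φ₂, φ₃)`; in particular both factors are finite when
`R(φ₁, φ₂, φ₃)` is (an infinite index is `0` in `ℕ`).
-/

namespace ReidemeisterNumber

variable {G A : Type*} [AddGroup G] [AddCommGroup A]

theorem tcRelAdd_iff_neg_add_mem_range (φ ψ : G →+ A) (a b : A) :
    tcRelAdd φ ψ a b ↔ -a + b ∈ (φ - ψ).range := by
  refine exists_congr fun z => ?_
  rw [AddMonoidHom.sub_apply, eq_neg_add_iff_add_eq, eq_comm, add_sub_assoc', add_comm a]

def quotTcRelAddEquiv (φ ψ : G →+ A) : Quot (tcRelAdd φ ψ) ≃ A ⧸ (φ - ψ).range :=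
  Quot.congrRight fun a b => (tcRelAdd_iff_neg_add_mem_range φ ψ a b).trans
    (QuotientAddGroup.leftRel_apply).symm

theorem tcRel₃Add_eq_tcRelAdd_prod (φ₁ φ₂ φ₃ : G →+ A) :
    tcRel₃Add φ₁ φ₂ φ₃ = tcRelAdd (φ₁.prod φ₁) (φ₂.prod φ₃) := by
  ext a b
  simp only [tcRel₃Add, tcRelAdd, Prod.ext_iff, Prod.fst_sub, Prod.snd_sub, Prod.fst_add,
    Prod.snd_add, AddMonoidHom.prod_apply]

theorem range_sub_prod_le (φ φ' ψ ψ' : G →+ A) :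
    (φ.prod φ' - ψ.prod ψ').range ≤ (φ - ψ).range.prod (φ' - ψ').range := by
  rintro _ ⟨z, rfl⟩
  exact ⟨⟨z, rfl⟩, ⟨z, rfl⟩⟩

end ReidemeisterNumber

open ReidemeisterNumber in
/-- Let `φ₁, φ₂, φ₃ : ℤ² → ℤ` be homomorphisms.  If `R(φ₁,φ₂,φ₃) < ∞` then
`R(φ₁,φ₂) < ∞`, `R(φ₁,φ₃) < ∞`, and the product `R(φ₁,φ₂)·R(φ₁,φ₃)` divides
`R(φ₁,φ₂,φ₃)`. -/
theorem prod_dvd_reidemeister_number_torus (φ₁ φ₂ φ₃ : ℤ × ℤ →+ ℤ)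
    (h : ENat.card (Quot (tcRel₃Add φ₁ φ₂ φ₃)) < ⊤) :
    ENat.card (Quot (tcRelAdd φ₁ φ₂)) < ⊤ ∧
    ENat.card (Quot (tcRelAdd φ₁ φ₃)) < ⊤ ∧
    Nat.card (Quot (tcRelAdd φ₁ φ₂)) * Nat.card (Quot (tcRelAdd φ₁ φ₃)) ∣
      Nat.card (Quot (tcRel₃Add φ₁ φ₂ φ₃)) := by
  rw [tcRel₃Add_eq_tcRelAdd_prod] at h ⊢
  simp only [ENat.card_congr (quotTcRelAddEquiv _ _), Nat.card_congr (quotTcRelAddEquiv _ _),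
    ENat.card_lt_top, ← AddSubgroup.index_ne_zero_iff_finite] at h ⊢
  have hdvd : (φ₁ - φ₂).range.index * (φ₁ - φ₃).range.index ∣
      (φ₁.prod φ₁ - φ₂.prod φ₃).range.index :=
    AddSubgroup.index_prod (φ₁ - φ₂).range (φ₁ - φ₃).range ▸
      AddSubgroup.index_dvd_of_le (range_sub_prod_le φ₁ φ₁ φ₂ φ₃)
  have hprod := ne_zero_of_dvd_ne_zero h hdvd
  exact ⟨left_ne_zero_of_mul hprod, right_ne_zero_of_mul hprod, hdvd⟩
end

section
/- Let A be an abelian group, G a group, and φ₁, …, φ_k : G → A homomorphisms (k ≥ 2). If R(φ₁, …, φ_k) < ∞, then R(φ₁, φ_j) < ∞ for every j = 2, …, k, and the product R(φ₁, φ₂)·R(φ₁, φ₃)⋯R(φ₁, φ_k) divides R(φ₁, …, φ_k). -/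
/-!
For an abelian target, `β = φ z * α * (ψ z)⁻¹` says `α⁻¹ * β = (φ / ψ) z`, so `R(φ, ψ)` is the
index of the range of `φ / ψ` and `R(φ₁, …, φ_k)` is the index of the range of the diagonal map
`z ↦ ((φ₁ / φ_j) z)_j` in `A^{k-1}`. That range lies in the product of the ranges of the
`φ₁ / φ_j`, whose index is `∏ R(φ₁, φ_j)`; indices of nested subgroups divide each other.
-/

/-- The twisted conjugacy relation on `H` determined by a pair of homomorphisms. -/
def tcRel {G H : Type*} [Group G] [Group H] (φ ψ : G →* H) (α β : H) : Prop :=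
  ∃ z : G, β = φ z * α * (ψ z)⁻¹

/-- The Reidemeister set `𝓡(φ, ψ)` of a pair of homomorphisms. -/
def ReidSet₂ {G H : Type*} [Group G] [Group H] (φ ψ : G →* H) : Type _ :=
  Quot (tcRel φ ψ)

theorem MonoidHom.prod_index_range_dvd_index_range_pi {G H ι : Type*} [Group G] [Group H]
    [Fintype ι] (f : ι → G →* H) :
    (∏ i, (f i).range.index) ∣ (MonoidHom.pi f).range.index := by
  rw [← Subgroup.index_pi]
  refine Subgroup.index_dvd_of_le ?_
  rintro _ ⟨z, rfl⟩ i -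
  exact ⟨z, rfl⟩

section Abelian

variable {G A : Type*} [Group G] [CommGroup A]

theorem eq_mul_mul_inv_iff_div_eq_inv_mul (a b α β : A) :
    β = a * α * b⁻¹ ↔ a / b = α⁻¹ * β := by
  rw [eq_comm (a := a / b), inv_mul_eq_iff_eq_mul, div_eq_mul_inv, ← mul_assoc, mul_comm α]

theorem tcRel_iff_inv_mul_mem_range (φ ψ : G →* A) (α β : A) :
    tcRel φ ψ α β ↔ α⁻¹ * β ∈ (φ / ψ).range := by
  simp only [tcRel, eq_mul_mul_inv_iff_div_eq_inv_mul, MonoidHom.mem_range, MonoidHom.div_apply]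

theorem mRel_iff_inv_mul_mem_range {m : ℕ} (φ : Fin (m + 1) → (G →* A)) (α β : Fin m → A) :
    mRel φ α β ↔ α⁻¹ * β ∈ (MonoidHom.pi fun i : Fin m => φ 0 / φ i.succ).range := by
  simp only [mRel, eq_mul_mul_inv_iff_div_eq_inv_mul, MonoidHom.mem_range, funext_iff,
    MonoidHom.pi_apply, MonoidHom.div_apply, Pi.mul_apply, Pi.inv_apply]

theorem natCard_reidSet₂_eq_index (φ ψ : G →* A) :
    Nat.card (ReidSet₂ φ ψ) = (φ / ψ).range.index :=
  Nat.card_congr <| Quot.congrRight fun α β =>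
    (tcRel_iff_inv_mul_mem_range φ ψ α β).trans QuotientGroup.leftRel_apply.symm

theorem natCard_reidSetM_eq_index {m : ℕ} (φ : Fin (m + 1) → (G →* A)) :
    Nat.card (ReidSetM φ) = (MonoidHom.pi fun i : Fin m => φ 0 / φ i.succ).range.index :=
  Nat.card_congr <| Quot.congrRight fun α β =>
    (mRel_iff_inv_mul_mem_range φ α β).trans QuotientGroup.leftRel_apply.symm

end Abelian

theorem prod_dvd_reidemeister_number_of_abelian_general {G A : Type*} [Group G] [CommGroup A]
    {m : ℕ} (φ : Fin (m + 1) → (G →* A))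
    (hfin : ENat.card (ReidSetM φ) < ⊤) :
    (∀ i : Fin m, ENat.card (ReidSet₂ (φ 0) (φ i.succ)) < ⊤) ∧
    (∏ i : Fin m, Nat.card (ReidSet₂ (φ 0) (φ i.succ))) ∣ Nat.card (ReidSetM φ) := by
  have hdvd : (∏ i : Fin m, Nat.card (ReidSet₂ (φ 0) (φ i.succ))) ∣ Nat.card (ReidSetM φ) := by
    simp only [natCard_reidSet₂_eq_index, natCard_reidSetM_eq_index]
    exact MonoidHom.prod_index_range_dvd_index_range_pi _
  refine ⟨fun i => ?_, hdvd⟩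
  have : Finite (ReidSetM φ) := ENat.card_lt_top.mp hfin
  have : Nonempty (ReidSetM φ) := ⟨Quot.mk _ 1⟩
  have hprod : (∏ i : Fin m, Nat.card (ReidSet₂ (φ 0) (φ i.succ))) ≠ 0 :=
    ne_zero_of_dvd_ne_zero Nat.card_pos.ne' hdvd
  exact ENat.card_lt_top.mpr <| Nat.finite_of_card_ne_zero <|
    Finset.prod_ne_zero_iff.mp hprod i (Finset.mem_univ i)

/-- Let `A` be an abelian group, `G` a group and `φ₁,…,φ_k : G → A` homomorphisms
(`k = m+1 ≥ 2`).  If `R(φ₁,…,φ_k) < ∞` then `R(φ₁,φ_j) < ∞` for every `j = 2,…,k`, and the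
product `R(φ₁,φ₂)⋯R(φ₁,φ_k)` divides `R(φ₁,…,φ_k)`. -/
theorem prod_dvd_reidemeister_number_of_abelian {G A : Type*} [Group G] [CommGroup A]
    {m : ℕ} (hm : 1 ≤ m) (φ : Fin (m + 1) → (G →* A))
    (hfin : ENat.card (ReidSetM φ) < ⊤) :
    (∀ i : Fin m, ENat.card (ReidSet₂ (φ 0) (φ i.succ)) < ⊤) ∧
    (∏ i : Fin m, Nat.card (ReidSet₂ (φ 0) (φ i.succ))) ∣ Nat.card (ReidSetM φ) :=
  prod_dvd_reidemeister_number_of_abelian_general φ hfin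
end

section
/- Let G, H be groups and φ₁, …, φ_k : G → H homomorphisms (k ≥ 2). If R(φ₁, …, φ_k) < ∞, then R(φ₁, φ_j) < ∞ for every j = 2, …, k, and R(φ₁, …, φ_k) ≥ R(φ₁, φ₂)·R(φ₁, φ₃)⋯R(φ₁, φ_k). -/
/-! Reading off the coordinates of a tuple gives a well-defined surjection from `𝓡(φ₁,…,φ_k)`
onto `∏ⱼ 𝓡(φ₁,φⱼ)`: one `z` twisting all coordinates at once twists each of them. -/

instance {G H : Type*} [Group G] [Group H] (φ ψ : G →* H) : Nonempty (ReidSet₂ φ ψ) :=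
  ⟨Quot.mk _ 1⟩

namespace ReidSetM

variable {G H : Type*} [Group G] [Group H] {m : ℕ} (φ : Fin (m + 1) → (G →* H))

def toPi : ReidSetM φ → ∀ i : Fin m, ReidSet₂ (φ 0) (φ i.succ) :=
  Quot.lift (fun α i => Quot.mk _ (α i)) fun _ _ ⟨z, hz⟩ => funext fun i => Quot.sound ⟨z, hz i⟩

theorem toPi_surjective : Function.Surjective (toPi φ) := by
  intro x
  choose α hα using fun i => Quot.exists_rep (x i)
  exact ⟨Quot.mk _ α, funext hα⟩

theorem finite_reidSet₂ [Finite (ReidSetM φ)] (i : Fin m) :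
    Finite (ReidSet₂ (φ 0) (φ i.succ)) :=
  .of_surjective (fun x => toPi φ x i) ((Function.surjective_eval i).comp (toPi_surjective φ))

theorem prod_card_reidSet₂_le [Finite (ReidSetM φ)] :
    ∏ i : Fin m, Nat.card (ReidSet₂ (φ 0) (φ i.succ)) ≤ Nat.card (ReidSetM φ) := by
  rw [← Nat.card_pi]
  exact Nat.card_le_card_of_surjective _ (toPi_surjective φ)

end ReidSetM

theorem reidemeister_number_ge_prod_general {G H : Type*} [Group G] [Group H] {m : ℕ}
    (φ : Fin (m + 1) → (G →* H)) (hfin : ENat.card (ReidSetM φ) < ⊤) :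
    (∀ i : Fin m, ENat.card (ReidSet₂ (φ 0) (φ i.succ)) < ⊤) ∧
    (∏ i : Fin m, Nat.card (ReidSet₂ (φ 0) (φ i.succ))) ≤ Nat.card (ReidSetM φ) := by
  have : Finite (ReidSetM φ) := ENat.card_lt_top.mp hfin
  exact ⟨fun i => ENat.card_lt_top.mpr (ReidSetM.finite_reidSet₂ φ i),
    ReidSetM.prod_card_reidSet₂_le φ⟩

/-- Let `G, H` be groups and `φ₁,…,φ_k : G → H` homomorphisms (`k = m+1 ≥ 2`).  If
`R(φ₁,…,φ_k) < ∞` then `R(φ₁,φ_j) < ∞` for every `j = 2,…,k`, and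
`R(φ₁,…,φ_k) ≥ R(φ₁,φ₂)⋯R(φ₁,φ_k)`. -/
theorem reidemeister_number_ge_prod {G H : Type*} [Group G] [Group H] {m : ℕ} (hm : 1 ≤ m)
    (φ : Fin (m + 1) → (G →* H)) (hfin : ENat.card (ReidSetM φ) < ⊤) :
    (∀ i : Fin m, ENat.card (ReidSet₂ (φ 0) (φ i.succ)) < ⊤) ∧
    (∏ i : Fin m, Nat.card (ReidSet₂ (φ 0) (φ i.succ))) ≤ Nat.card (ReidSetM φ) :=
  reidemeister_number_ge_prod_general φ hfin
end

section
/- Let φ₁, φ₂, φ₃ : ℤ² → ℤ be homomorphisms with φ_i(1,0) = a_i and φ_i(0,1) = b_i (i = 1, 2, 3). Then 𝓡(φ₁, φ₂, φ₃) is in bijection with the quotient (ℤ ⊕ ℤ)/⟨(a₂ − a₁, a₃ − a₁), (b₂ − b₁, b₃ − b₁)⟩. Moreover, if det D ≠ 0, where D is the 2×2 matrix with rows (a₂ − a₁, b₂ − b₁) and (a₃ − a₁, b₃ − b₁), then R(φ₁, φ₂, φ₃) = |det D| and, for j = 2, 3, R(φ₁, φ_j) = gcd(a_j − a₁, b_j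 − b₁) < ∞. -/
/-!
Both relations say that `a - b` lies in the range of a homomorphism out of `ℤ²`: of
`z ↦ ((φ₂ - φ₁) z, (φ₃ - φ₁) z)` for the triple and of `φⱼ - φ₁` for a pair. So the Reidemeister
sets are quotients of `ℤ²`, resp. `ℤ`, by subgroups generated by the images of `(1, 0)` and
`(0, 1)`. A full-rank subgroup of `ℤ²` has index the absolute value of the determinant of its
generators (Smith normal form), and the subgroup of `ℤ` generated by `x` and `y` is
`gcd(x, y) ℤ`.
-/

open AddSubgroup

section TwistedConjugacy

variable {G A : Type*} [AddGroup G] [AddCommGroup A]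

theorem tcRelAdd_iff_sub_mem_range (φ ψ : G →+ A) (α β : A) :
    tcRelAdd φ ψ α β ↔ α - β ∈ (ψ - φ).range := by
  simp only [tcRelAdd, AddMonoidHom.mem_range, AddMonoidHom.sub_apply]
  exact exists_congr fun z => by grind

theorem tcRel₃Add_iff_sub_mem_range (φ₁ φ₂ φ₃ : G →+ A) (a b : A × A) :
    tcRel₃Add φ₁ φ₂ φ₃ a b ↔ a - b ∈ ((φ₂ - φ₁).prod (φ₃ - φ₁)).range := by
  simp only [tcRel₃Add, AddMonoidHom.mem_range, AddMonoidHom.prod_apply, AddMonoidHom.sub_apply,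
    Prod.ext_iff, Prod.fst_sub, Prod.snd_sub]
  exact exists_congr fun z => and_congr (by grind) (by grind)

end TwistedConjugacy

namespace Quot

variable {A : Type*} [AddCommGroup A] {r : A → A → Prop} {H : AddSubgroup A}

def equivQuotientOfIffSubMem (h : ∀ a b, r a b ↔ a - b ∈ H) : Quot r ≃ A ⧸ H :=
  Quot.congrRight fun a b => (h a b).trans <| by
    rw [QuotientAddGroup.leftRel_apply, neg_add_eq_sub, sub_mem_comm_iff]

theorem natCard_eq_index_of_iff_sub_mem (h : ∀ a b, r a b ↔ a - b ∈ H) :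
    Nat.card (Quot r) = H.index :=
  Nat.card_congr (equivQuotientOfIffSubMem h)

end Quot

namespace AddMonoidHom

variable {B : Type*} [AddCommGroup B]

theorem int_prod_apply (f : ℤ × ℤ →+ B) (m n : ℤ) : f (m, n) = m • f (1, 0) + n • f (0, 1) := by
  rw [← map_zsmul, ← map_zsmul, ← map_add, Prod.smul_mk, Prod.smul_mk, Prod.mk_add_mk]
  simp

theorem range_int_prod (f : ℤ × ℤ →+ B) : f.range = closure {f (1, 0), f (0, 1)} := by
  ext z
  rw [mem_range, mem_closure_pair]
  exact ⟨fun ⟨⟨m, n⟩, h⟩ => ⟨m, n, by rw [← h, int_prod_apply f m n]⟩,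
    fun ⟨m, n, h⟩ => ⟨(m, n), by rw [int_prod_apply f m n, h]⟩⟩

end AddMonoidHom

namespace AddSubgroup

theorem index_closure_range_eq_natAbs_det {E ι : Type*} [AddCommGroup E] [Fintype ι]
    [DecidableEq ι] (b : Module.Basis ι ℤ E) (v : ι → E) (hv : b.det v ≠ 0) :
    (closure (Set.range v)).index = (b.det v).natAbs := by
  have hli : LinearIndependent ℤ v := not_imp_comm.mp (b.det.map_linearDependent v) hv
  have hspan : Submodule.span ℤ (Set.range v) = (closure (Set.range v)).toIntSubmodule := by
    rw [← Submodule.span_int_eq_addSubgroupClosure]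
    rfl
  convert index_eq_natAbs_det b _ ((Module.Basis.span hli).map (LinearEquiv.ofEq _ _ hspan))
  exact (congrArg Subtype.val (Module.Basis.span_apply hli _)).symm

theorem index_closure_pair_int_prod (p q r s : ℤ)
    (h : (!![p, r; q, s] : Matrix (Fin 2) (Fin 2) ℤ).det ≠ 0) :
    (closure {(p, q), (r, s)}).index = (!![p, r; q, s] : Matrix (Fin 2) (Fin 2) ℤ).det.natAbs := by
  have hdet : (Module.Basis.finTwoProd ℤ).det ![(p, q), (r, s)] = (!![p, r; q, s]).det := by
    rw [Module.Basis.det_apply]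
    congr 1
    ext i j
    fin_cases i <;> fin_cases j <;> simp [Module.Basis.toMatrix_apply]
  rw [← hdet] at h ⊢
  rw [← index_closure_range_eq_natAbs_det _ _ h, Matrix.range_cons_cons_empty]

end AddSubgroup

theorem natCard_quot_tcRelAdd_int_prod (φ ψ : ℤ × ℤ →+ ℤ) :
    Nat.card (Quot (tcRelAdd φ ψ)) = Int.gcd (ψ (1, 0) - φ (1, 0)) (ψ (0, 1) - φ (0, 1)) := by
  rw [Quot.natCard_eq_index_of_iff_sub_mem (tcRelAdd_iff_sub_mem_range φ ψ),
    AddMonoidHom.range_int_prod, Int.closure_eq_zmultiples, Int.index_zmultiples,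
    Int.natAbs_natCast]
  rfl

/-- Let `φ₁, φ₂, φ₃ : ℤ² → ℤ` be homomorphisms with `φ_i(1,0) = a_i`, `φ_i(0,1) = b_i`.
Then `𝓡(φ₁,φ₂,φ₃)` is in bijection with
`(ℤ ⊕ ℤ) ⧸ ⟨(a₂-a₁, a₃-a₁), (b₂-b₁, b₃-b₁)⟩`.  Moreover if `det D ≠ 0`, where `D` has rows
`(a₂-a₁, b₂-b₁)` and `(a₃-a₁, b₃-b₁)`, then `R(φ₁,φ₂,φ₃) = |det D|` and, for `j = 2, 3`,
`R(φ₁,φ_j) = gcd(a_j-a₁, b_j-b₁) < ∞`. -/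
theorem reidemeister_triple_torus (φ₁ φ₂ φ₃ : ℤ × ℤ →+ ℤ) (a₁ a₂ a₃ b₁ b₂ b₃ : ℤ)
    (ha₁ : φ₁ (1, 0) = a₁) (hb₁ : φ₁ (0, 1) = b₁)
    (ha₂ : φ₂ (1, 0) = a₂) (hb₂ : φ₂ (0, 1) = b₂)
    (ha₃ : φ₃ (1, 0) = a₃) (hb₃ : φ₃ (0, 1) = b₃) :
    (∃ e : Quot (tcRel₃Add φ₁ φ₂ φ₃) ≃
        ((ℤ × ℤ) ⧸ AddSubgroup.closure {(a₂ - a₁, a₃ - a₁), (b₂ - b₁, b₃ - b₁)}),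
      ∀ a : ℤ × ℤ, e (Quot.mk _ a) = QuotientAddGroup.mk a) ∧
    ((!![a₂ - a₁, b₂ - b₁; a₃ - a₁, b₃ - b₁] : Matrix (Fin 2) (Fin 2) ℤ).det ≠ 0 →
      Nat.card (Quot (tcRel₃Add φ₁ φ₂ φ₃)) =
        (!![a₂ - a₁, b₂ - b₁; a₃ - a₁, b₃ - b₁] : Matrix (Fin 2) (Fin 2) ℤ).det.natAbs ∧
      (ENat.card (Quot (tcRelAdd φ₁ φ₂)) < ⊤ ∧
        Nat.card (Quot (tcRelAdd φ₁ φ₂)) = Int.gcd (a₂ - a₁) (b₂ - b₁)) ∧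
      (ENat.card (Quot (tcRelAdd φ₁ φ₃)) < ⊤ ∧
        Nat.card (Quot (tcRelAdd φ₁ φ₃)) = Int.gcd (a₃ - a₁) (b₃ - b₁))) := by
  have hrange : ((φ₂ - φ₁).prod (φ₃ - φ₁)).range =
      AddSubgroup.closure {(a₂ - a₁, a₃ - a₁), (b₂ - b₁, b₃ - b₁)} := by
    rw [AddMonoidHom.range_int_prod]
    simp [ha₁, hb₁, ha₂, hb₂, ha₃, hb₃]
  have hrel : ∀ a b, tcRel₃Add φ₁ φ₂ φ₃ a b ↔
      a - b ∈ AddSubgroup.closure {(a₂ - a₁, a₃ - a₁), (b₂ - b₁, b₃ - b₁)} :=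
    hrange ▸ tcRel₃Add_iff_sub_mem_range φ₁ φ₂ φ₃
  have hpair : ∀ {φ : ℤ × ℤ →+ ℤ} {a b : ℤ}, φ (1, 0) = a → φ (0, 1) = b →
      Int.gcd (a - a₁) (b - b₁) ≠ 0 → ENat.card (Quot (tcRelAdd φ₁ φ)) < ⊤ ∧
        Nat.card (Quot (tcRelAdd φ₁ φ)) = Int.gcd (a - a₁) (b - b₁) := by
    rintro φ a b rfl rfl hgcd
    have hcard : Nat.card (Quot (tcRelAdd φ₁ φ)) = Int.gcd (φ (1, 0) - a₁) (φ (0, 1) - b₁) := by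
      rw [natCard_quot_tcRelAdd_int_prod, ha₁, hb₁]
    exact ⟨ENat.card_lt_top.2 (Nat.finite_of_card_ne_zero (hcard ▸ hgcd)), hcard⟩
  refine ⟨⟨Quot.equivQuotientOfIffSubMem hrel, fun _ => rfl⟩, fun hdet => ⟨?_, ?_, ?_⟩⟩
  · exact (Quot.natCard_eq_index_of_iff_sub_mem hrel).trans
      (index_closure_pair_int_prod _ _ _ _ hdet)
  · refine hpair ha₂ hb₂ fun h => hdet ?_
    rw [Int.gcd_eq_zero_iff] at h
    simp [Matrix.det_fin_two_of, h]
  · refine hpair ha₃ hb₃ fun h => hdet ?_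
    rw [Int.gcd_eq_zero_iff] at h
    simp [Matrix.det_fin_two_of, h]
end

section
/- Let φ₁, φ₂, φ₃, φ₄ : ℤ³ → ℤ be the homomorphisms given (as row vectors on the standard basis) by φ₁ = (1, 1, 1), φ₂ = (3, 5, 2), φ₃ = (3, 7, 3), φ₄ = (2, 1, 3). Then R(φ₁, φ₂, φ₃, φ₄) = 10, R(φ₁, φ₂, φ₃) = 2, R(φ₁, φ₂, φ₄) = 1, R(φ₁, φ₃, φ₄) = 2, and the product R(φ₁, φ₂, φ₃)·R(φ₁, φ₂, φ₄)·R(φ₁, φ₃, φ₄) = 4 does not divide R(φ₁, φ₂, φ₃, φ₄) = 10. In particular, the product of the Reidemeister numbers of all (k−1)-element subfamilies need not divide R(φ₁, …, φ_k) when k = 4. -/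
/-- The relation on triples defining the Reidemeister classes of a quadruple of
homomorphisms `φ₁ φ₂ φ₃ φ₄ : G →+ A`. -/
def tcRel₄Add {G A : Type*} [AddGroup G] [AddGroup A] (φ₁ φ₂ φ₃ φ₄ : G →+ A)
    (a b : A × A × A) : Prop :=
  ∃ z : G, b.1 = φ₁ z + a.1 - φ₂ z ∧ b.2.1 = φ₁ z + a.2.1 - φ₃ z ∧
    b.2.2 = φ₁ z + a.2.2 - φ₄ z

theorem AddSubgroup.nat_card_quot_eq_index {A : Type*} [AddCommGroup A] (H : AddSubgroup A)
    {r : A → A → Prop} (hr : ∀ a b, r a b ↔ b - a ∈ H) : Nat.card (Quot r) = H.index :=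
  Nat.card_congr <| Quot.congrRight fun a b => by
    rw [hr, QuotientAddGroup.leftRel_apply, neg_add_eq_sub]

theorem AddSubgroup.index_eq_of_mem_iff_dvd {A : Type*} [AddCommGroup A] {H : AddSubgroup A}
    {ℓ : A →+ ℤ} (hℓ : Function.Surjective ℓ) {n : ℕ} (hH : ∀ v, v ∈ H ↔ (n : ℤ) ∣ ℓ v) :
    H.index = n := by
  have : H = (AddSubgroup.zmultiples (n : ℤ)).comap ℓ := by
    ext v; rw [hH, AddSubgroup.mem_comap, Int.mem_zmultiples_iff]
  rw [this, AddSubgroup.index_comap_of_surjective _ hℓ, Int.index_zmultiples, Int.natAbs_natCast]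

section Cokernel

variable {G A : Type*} [AddGroup G] [AddCommGroup A]

theorem eq_add_sub_iff_sub_eq_sub {x y u v : A} : y = u + x - v ↔ u - v = y - x := by
  rw [eq_sub_iff_add_eq, sub_eq_sub_iff_add_eq_add, eq_comm]

def reidemeisterMap₃ (φ₁ φ₂ φ₃ : G →+ A) : G →+ A × A :=
  (φ₁ - φ₂).prod (φ₁ - φ₃)

def reidemeisterMap₄ (φ₁ φ₂ φ₃ φ₄ : G →+ A) : G →+ A × A × A :=
  (φ₁ - φ₂).prod ((φ₁ - φ₃).prod (φ₁ - φ₄))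

@[simp]
theorem reidemeisterMap₃_apply (φ₁ φ₂ φ₃ : G →+ A) (z : G) :
    reidemeisterMap₃ φ₁ φ₂ φ₃ z = (φ₁ z - φ₂ z, φ₁ z - φ₃ z) := rfl

@[simp]
theorem reidemeisterMap₄_apply (φ₁ φ₂ φ₃ φ₄ : G →+ A) (z : G) :
    reidemeisterMap₄ φ₁ φ₂ φ₃ φ₄ z = (φ₁ z - φ₂ z, φ₁ z - φ₃ z, φ₁ z - φ₄ z) := rfl

theorem tcRel₃Add_iff {φ₁ φ₂ φ₃ : G →+ A} {a b : A × A} :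
    tcRel₃Add φ₁ φ₂ φ₃ a b ↔ b - a ∈ (reidemeisterMap₃ φ₁ φ₂ φ₃).range := by
  simp only [tcRel₃Add, AddMonoidHom.mem_range, reidemeisterMap₃_apply, Prod.ext_iff,
    Prod.fst_sub, Prod.snd_sub, eq_add_sub_iff_sub_eq_sub]

theorem tcRel₄Add_iff {φ₁ φ₂ φ₃ φ₄ : G →+ A} {a b : A × A × A} :
    tcRel₄Add φ₁ φ₂ φ₃ φ₄ a b ↔ b - a ∈ (reidemeisterMap₄ φ₁ φ₂ φ₃ φ₄).range := by
  simp only [tcRel₄Add, AddMonoidHom.mem_range, reidemeisterMap₄_apply, Prod.ext_iff,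
    Prod.fst_sub, Prod.snd_sub, eq_add_sub_iff_sub_eq_sub]

theorem nat_card_quot_tcRel₃Add (φ₁ φ₂ φ₃ : G →+ A) :
    Nat.card (Quot (tcRel₃Add φ₁ φ₂ φ₃)) = (reidemeisterMap₃ φ₁ φ₂ φ₃).range.index :=
  AddSubgroup.nat_card_quot_eq_index _ fun _ _ => tcRel₃Add_iff

theorem nat_card_quot_tcRel₄Add (φ₁ φ₂ φ₃ φ₄ : G →+ A) :
    Nat.card (Quot (tcRel₄Add φ₁ φ₂ φ₃ φ₄)) = (reidemeisterMap₄ φ₁ φ₂ φ₃ φ₄).range.index :=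
  AddSubgroup.nat_card_quot_eq_index _ fun _ _ => tcRel₄Add_iff

end Cokernel

@[simps]
def rowHom (a b c : ℤ) : (Fin 3 → ℤ) →+ ℤ where
  toFun x := a * x 0 + b * x 1 + c * x 2
  map_zero' := by simp
  map_add' x y := by simp only [Pi.add_apply]; ring

theorem index_range_reidemeisterMap₄_rowHom :
    (reidemeisterMap₄ (rowHom 1 1 1) (rowHom 3 5 2) (rowHom 3 7 3) (rowHom 2 1 3)).range.index
      = 10 := by
  let ℓ : ℤ × ℤ × ℤ →+ ℤ := AddMonoidHom.mk' (fun v => -2 * v.1 + 3 * v.2.1 - 2 * v.2.2)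
    fun v w => by simp only [Prod.fst_add, Prod.snd_add]; ring
  refine AddSubgroup.index_eq_of_mem_iff_dvd (ℓ := ℓ)
    (fun t => ⟨(0, t, t), by simp only [ℓ, AddMonoidHom.mk'_apply]; ring⟩) fun v => ⟨?_, ?_⟩
  · rintro ⟨z, rfl⟩
    exact ⟨-z 1, by simp only [ℓ, AddMonoidHom.mk'_apply, reidemeisterMap₄_apply, rowHom_apply]; ring⟩
  · rintro ⟨k, hk⟩
    simp only [ℓ, AddMonoidHom.mk'_apply, Nat.cast_ofNat] at hk
    refine ⟨![6 * k - v.2.1 + v.2.2, -k, 2 * k + v.1 - v.2.1], ?_⟩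
    ext <;> simp only [reidemeisterMap₄_apply, rowHom_apply, Matrix.cons_val] <;> linarith

theorem index_range_reidemeisterMap₃_rowHom_123 :
    (reidemeisterMap₃ (rowHom 1 1 1) (rowHom 3 5 2) (rowHom 3 7 3)).range.index = 2 := by
  refine AddSubgroup.index_eq_of_mem_iff_dvd (ℓ := AddMonoidHom.snd ℤ ℤ) Prod.snd_surjective
    fun v => ⟨?_, ?_⟩
  · rintro ⟨z, rfl⟩
    exact ⟨-z 0 - 3 * z 1 - z 2, by
      simp only [AddMonoidHom.coe_snd, reidemeisterMap₃_apply, rowHom_apply]; ring⟩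
  · rintro ⟨k, hk⟩
    simp only [AddMonoidHom.coe_snd, Nat.cast_ofNat] at hk
    refine ⟨![k - v.1, 0, v.1 - 2 * k], ?_⟩
    ext <;> simp only [reidemeisterMap₃_apply, rowHom_apply, Matrix.cons_val] <;> linarith

theorem index_range_reidemeisterMap₃_rowHom_134 :
    (reidemeisterMap₃ (rowHom 1 1 1) (rowHom 3 7 3) (rowHom 2 1 3)).range.index = 2 := by
  refine AddSubgroup.index_eq_of_mem_iff_dvd (ℓ := AddMonoidHom.fst ℤ ℤ) Prod.fst_surjective
    fun v => ⟨?_, ?_⟩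
  · rintro ⟨z, rfl⟩
    exact ⟨-z 0 - 3 * z 1 - z 2, by
      simp only [AddMonoidHom.coe_fst, reidemeisterMap₃_apply, rowHom_apply]; ring⟩
  · rintro ⟨k, hk⟩
    simp only [AddMonoidHom.coe_fst, Nat.cast_ofNat] at hk
    refine ⟨![v.2 - 2 * k, 0, k - v.2], ?_⟩
    ext <;> simp only [reidemeisterMap₃_apply, rowHom_apply, Matrix.cons_val] <;> linarith

theorem range_reidemeisterMap₃_rowHom_124 :
    (reidemeisterMap₃ (rowHom 1 1 1) (rowHom 3 5 2) (rowHom 2 1 3)).range = ⊤ := by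
  refine AddMonoidHom.range_eq_top.mpr fun v =>
    ⟨![2 * v.1 - 5 * v.2, 2 * v.2 - v.1, 2 * v.2 - v.1], ?_⟩
  ext <;> simp only [reidemeisterMap₃_apply, rowHom_apply, Matrix.cons_val] <;> ring

/-- Let `φ₁, φ₂, φ₃, φ₄ : ℤ³ → ℤ` be given by the row vectors `(1,1,1)`, `(3,5,2)`,
`(3,7,3)`, `(2,1,3)`.  Then `R(φ₁,φ₂,φ₃,φ₄) = 10`, `R(φ₁,φ₂,φ₃) = 2`, `R(φ₁,φ₂,φ₄) = 1`,
`R(φ₁,φ₃,φ₄) = 2`, and the product `R(φ₁,φ₂,φ₃)·R(φ₁,φ₂,φ₄)·R(φ₁,φ₃,φ₄) = 4` does not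
divide `R(φ₁,φ₂,φ₃,φ₄) = 10`. -/
theorem reidemeister_quadruple_example (φ₁ φ₂ φ₃ φ₄ : (Fin 3 → ℤ) →+ ℤ)
    (h₁ : ∀ x, φ₁ x = 1 * x 0 + 1 * x 1 + 1 * x 2)
    (h₂ : ∀ x, φ₂ x = 3 * x 0 + 5 * x 1 + 2 * x 2)
    (h₃ : ∀ x, φ₃ x = 3 * x 0 + 7 * x 1 + 3 * x 2)
    (h₄ : ∀ x, φ₄ x = 2 * x 0 + 1 * x 1 + 3 * x 2) :
    Nat.card (Quot (tcRel₄Add φ₁ φ₂ φ₃ φ₄)) = 10 ∧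
    Nat.card (Quot (tcRel₃Add φ₁ φ₂ φ₃)) = 2 ∧
    Nat.card (Quot (tcRel₃Add φ₁ φ₂ φ₄)) = 1 ∧
    Nat.card (Quot (tcRel₃Add φ₁ φ₃ φ₄)) = 2 ∧
    ¬ (Nat.card (Quot (tcRel₃Add φ₁ φ₂ φ₃)) * Nat.card (Quot (tcRel₃Add φ₁ φ₂ φ₄)) *
        Nat.card (Quot (tcRel₃Add φ₁ φ₃ φ₄)) ∣ Nat.card (Quot (tcRel₄Add φ₁ φ₂ φ₃ φ₄))) := by
  obtain rfl : φ₁ = rowHom 1 1 1 := AddMonoidHom.ext h₁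
  obtain rfl : φ₂ = rowHom 3 5 2 := AddMonoidHom.ext h₂
  obtain rfl : φ₃ = rowHom 3 7 3 := AddMonoidHom.ext h₃
  obtain rfl : φ₄ = rowHom 2 1 3 := AddMonoidHom.ext h₄
  simp only [nat_card_quot_tcRel₃Add, nat_card_quot_tcRel₄Add,
    index_range_reidemeisterMap₄_rowHom, index_range_reidemeisterMap₃_rowHom_123,
    index_range_reidemeisterMap₃_rowHom_134, range_reidemeisterMap₃_rowHom_124,
    AddSubgroup.index_top]
  decide
end

section
/- Let G₁, G₂ be groups, A₁ a normal subgroup of G₁, A₂ a subgroup of the center of G₂, and φ, ψ : G₁ → G₂ homomorphisms with φ(A₁) ⊆ A₂ and ψ(A₁) ⊆ A₂ (so that φ, ψ induce homomorphisms φ̄, ψ̄ : G₁/A₁ → G₂/A₂). Then: (i) the map A₁ → A₂, z ↦ φ(z)·ψ(z)⁻¹, is a group homomorphism; let S ⊆ A₂ denote its image; (ii) two elements α, β ∈ A₂ satisfy β = φ(z)·α·ψ(z)⁻¹ for some z ∈ A₁ if and only if β·α⁻¹ ∈ S, so the Reidemeister set 𝓡(φ|_{A₁}, ψ|_{A₁})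 is the abelian group A₂/S; (iii) the map δ : Coin(φ̄, ψ̄) → A₂/S, defined on the subgroup Coin(φ̄, ψ̄) = {x ∈ G₁/A₁ : φ̄(x) = ψ̄(x)} by δ(θ̄) = (ψ(θ)·φ(θ)⁻¹)·S for any preimage θ ∈ G₁ of θ̄, is a well-defined group homomorphism. -/
/-- The restriction `A₁ → A₂` of a homomorphism `φ : G₁ → G₂` with `φ(A₁) ⊆ A₂`. -/
def restrict₂ {G₁ G₂ : Type*} [Group G₁] [Group G₂] (A₁ : Subgroup G₁) (A₂ : Subgroup G₂)
    (φ : G₁ →* G₂) (hφ : ∀ a ∈ A₁, φ a ∈ A₂) : ↥A₁ →* ↥A₂ :=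
  (φ.domRestrict A₁).codRestrict A₂ fun z => hφ z z.2

/-- The induced homomorphism `G₁/A₁ → G₂/A₂`. -/
def barMap {G₁ G₂ : Type*} [Group G₁] [Group G₂] (A₁ : Subgroup G₁) [A₁.Normal]
    (A₂ : Subgroup G₂) [A₂.Normal] (φ : G₁ →* G₂) (hφ : ∀ a ∈ A₁, φ a ∈ A₂) :
    G₁ ⧸ A₁ →* G₂ ⧸ A₂ :=
  QuotientGroup.map A₁ A₂ φ fun a ha => hφ a ha

lemma dmap_mul {G₁ G₂ : Type*} [Group G₁] [Group G₂] {A₁ : Subgroup G₁} {A₂ : Subgroup G₂}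
    (hA₂ : A₂ ≤ Subgroup.center G₂) (φ ψ : G₁ →* G₂)
    (hφ : ∀ a ∈ A₁, φ a ∈ A₂) (hψ : ∀ a ∈ A₁, ψ a ∈ A₂) (z w : ↥A₁) :
    restrict₂ A₁ A₂ φ hφ (z * w) * (restrict₂ A₁ A₂ ψ hψ (z * w))⁻¹ =
      (restrict₂ A₁ A₂ φ hφ z * (restrict₂ A₁ A₂ ψ hψ z)⁻¹) *
      (restrict₂ A₁ A₂ φ hφ w * (restrict₂ A₁ A₂ ψ hψ w)⁻¹) := by
  have hcomm : ∀ a b : ↥A₂, a * b = b * a := fun a b =>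
    Subtype.ext ((Subgroup.mem_center_iff.mp (hA₂ b.2)) ↑a)
  letI : CommGroup ↥A₂ := { (inferInstance : Group ↥A₂) with mul_comm := hcomm }
  rw [map_mul, map_mul, mul_inv, mul_mul_mul_comm]

/-- The image `S = {φ(z)·ψ(z)⁻¹ : z ∈ A₁}` of the map `z ↦ φ(z)·ψ(z)⁻¹`, as a subgroup
of `A₂` (using that `A₂` is central in `G₂`). -/
def Ssub {G₁ G₂ : Type*} [Group G₁] [Group G₂] {A₁ : Subgroup G₁} {A₂ : Subgroup G₂}
    (hA₂ : A₂ ≤ Subgroup.center G₂) (φ ψ : G₁ →* G₂)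
    (hφ : ∀ a ∈ A₁, φ a ∈ A₂) (hψ : ∀ a ∈ A₁, ψ a ∈ A₂) : Subgroup ↥A₂ where
  carrier := Set.range fun z : ↥A₁ =>
    restrict₂ A₁ A₂ φ hφ z * (restrict₂ A₁ A₂ ψ hψ z)⁻¹
  one_mem' := ⟨1, by simp⟩
  mul_mem' := by
    rintro x y ⟨z, rfl⟩ ⟨w, rfl⟩
    exact ⟨z * w, dmap_mul hA₂ φ ψ hφ hψ z w⟩
  inv_mem' := by
    rintro x ⟨z, rfl⟩
    refine ⟨z⁻¹, ?_⟩
    have hcomm : ∀ a b : ↥A₂, a * b = b * a := fun a b =>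
      Subtype.ext ((Subgroup.mem_center_iff.mp (hA₂ b.2)) ↑a)
    letI : CommGroup ↥A₂ := { (inferInstance : Group ↥A₂) with mul_comm := hcomm }
    show restrict₂ A₁ A₂ φ hφ z⁻¹ * (restrict₂ A₁ A₂ ψ hψ z⁻¹)⁻¹ =
      (restrict₂ A₁ A₂ φ hφ z * (restrict₂ A₁ A₂ ψ hψ z)⁻¹)⁻¹
    rw [map_inv, map_inv, mul_inv, inv_inv, mul_comm]

instance Ssub.normal {G₁ G₂ : Type*} [Group G₁] [Group G₂] {A₁ : Subgroup G₁}
    {A₂ : Subgroup G₂} (hA₂ : A₂ ≤ Subgroup.center G₂) (φ ψ : G₁ →* G₂)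
    (hφ : ∀ a ∈ A₁, φ a ∈ A₂) (hψ : ∀ a ∈ A₁, ψ a ∈ A₂) :
    (Ssub hA₂ φ ψ hφ hψ).Normal := by
  constructor
  intro n hn g
  have hgn : g * n = n * g := Subtype.ext ((Subgroup.mem_center_iff.mp (hA₂ n.2)) ↑g)
  have : g * n * g⁻¹ = n := by rw [hgn, mul_assoc, mul_inv_cancel, mul_one]
  rwa [this]

section Aux

variable {G₁ G₂ : Type*} [Group G₁] [Group G₂] {A₁ : Subgroup G₁} {A₂ : Subgroup G₂}
  (hA₂ : A₂ ≤ Subgroup.center G₂) (φ ψ : G₁ →* G₂)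
  (hφ : ∀ a ∈ A₁, φ a ∈ A₂) (hψ : ∀ a ∈ A₁, ψ a ∈ A₂)

/-- twisted-conjugacy over `A₁` is translation by `S` (part (ii)). -/
lemma tc_iff_aux (α β : ↥A₂) :
    (∃ z : ↥A₁, (β : G₂) = φ ↑z * ↑α * (ψ (↑z : G₁))⁻¹) ↔
      β * α⁻¹ ∈ Ssub hA₂ φ ψ hφ hψ := by
  have hc : ∀ {a : G₂}, a ∈ A₂ → ∀ g : G₂, g * a = a * g :=
    fun ha g => Subgroup.mem_center_iff.mp (hA₂ ha) g
  constructor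
  · rintro ⟨z, hz⟩
    refine ⟨z, ?_⟩
    apply Subtype.ext
    show φ ↑z * (ψ (↑z : G₁))⁻¹ = ↑β * (↑α)⁻¹
    rw [hz, mul_assoc (φ ↑z), ← hc α.2 (ψ (↑z : G₁))⁻¹]
    group
  · rintro ⟨z, hz⟩
    refine ⟨z, ?_⟩
    have hz' : φ ↑z * (ψ (↑z : G₁))⁻¹ = ↑β * (↑α)⁻¹ := congrArg Subtype.val hz
    have : (β : G₂) = φ ↑z * (ψ (↑z : G₁))⁻¹ * ↑α := by rw [hz']; group
    rw [this, mul_assoc (φ ↑z), hc α.2 (ψ (↑z : G₁))⁻¹, ← mul_assoc]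

variable [A₁.Normal] [A₂.Normal]

open Classical in
/-- The auxiliary map `θ ↦ (ψ(θ)·φ(θ)⁻¹)·S` on `G₁`. -/
noncomputable def gmap : G₁ → ↥A₂ ⧸ Ssub hA₂ φ ψ hφ hψ := fun θ =>
  if h : ψ θ * (φ θ)⁻¹ ∈ A₂ then QuotientGroup.mk ⟨ψ θ * (φ θ)⁻¹, h⟩ else 1

lemma gmap_spec (θ : G₁) (h : ψ θ * (φ θ)⁻¹ ∈ A₂) :
    gmap hA₂ φ ψ hφ hψ θ = QuotientGroup.mk (⟨ψ θ * (φ θ)⁻¹, h⟩ : ↥A₂) := by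
  unfold gmap
  exact dif_pos h

lemma gmap_eq_of_factor (θ η : G₁) (s : ↥A₂)
    (heq : ψ η * (φ η)⁻¹ = (ψ θ * (φ θ)⁻¹) * ↑s) (hs : s ∈ Ssub hA₂ φ ψ hφ hψ) :
    gmap hA₂ φ ψ hφ hψ η = gmap hA₂ φ ψ hφ hψ θ := by
  by_cases h : ψ θ * (φ θ)⁻¹ ∈ A₂
  · have h' : ψ η * (φ η)⁻¹ ∈ A₂ := heq ▸ mul_mem h s.2
    rw [gmap_spec hA₂ φ ψ hφ hψ η h', gmap_spec hA₂ φ ψ hφ hψ θ h]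
    refine (QuotientGroup.eq).mpr ?_
    have : (⟨ψ η * (φ η)⁻¹, h'⟩ : ↥A₂)⁻¹ * ⟨ψ θ * (φ θ)⁻¹, h⟩ = s⁻¹ := by
      apply Subtype.ext
      show (ψ η * (φ η)⁻¹)⁻¹ * (ψ θ * (φ θ)⁻¹) = (↑s)⁻¹
      rw [heq]; group
    rw [this]
    exact inv_mem hs
  · have h' : ¬ ψ η * (φ η)⁻¹ ∈ A₂ := by
      intro h'
      apply h
      have : ψ θ * (φ θ)⁻¹ = (ψ η * (φ η)⁻¹) * (↑s)⁻¹ := by rw [heq]; group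
      rw [this]
      exact mul_mem h' (inv_mem s.2)
    simp only [gmap]
    rw [dif_neg h, dif_neg h']

lemma gmap_mul_mem (θ a : G₁) (ha : a ∈ A₁) :
    gmap hA₂ φ ψ hφ hψ (θ * a) = gmap hA₂ φ ψ hφ hψ θ := by
  have hc : ∀ {x : G₂}, x ∈ A₂ → ∀ g : G₂, g * x = x * g :=
    fun hx g => Subgroup.mem_center_iff.mp (hA₂ hx) g
  have hsA : ψ a * (φ a)⁻¹ ∈ A₂ := mul_mem (hψ a ha) (inv_mem (hφ a ha))
  have hsS : (⟨ψ a * (φ a)⁻¹, hsA⟩ : ↥A₂) ∈ Ssub hA₂ φ ψ hφ hψ := by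
    have hw : restrict₂ A₁ A₂ φ hφ ⟨a, ha⟩ * (restrict₂ A₁ A₂ ψ hψ ⟨a, ha⟩)⁻¹ ∈
        Ssub hA₂ φ ψ hφ hψ := ⟨⟨a, ha⟩, rfl⟩
    have he : (⟨ψ a * (φ a)⁻¹, hsA⟩ : ↥A₂) =
        (restrict₂ A₁ A₂ φ hφ ⟨a, ha⟩ * (restrict₂ A₁ A₂ ψ hψ ⟨a, ha⟩)⁻¹)⁻¹ := by
      apply Subtype.ext
      show ψ a * (φ a)⁻¹ = (φ a * (ψ a)⁻¹)⁻¹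
      group
    rw [he]
    exact inv_mem hw
  refine gmap_eq_of_factor hA₂ φ ψ hφ hψ θ (θ * a) ⟨ψ a * (φ a)⁻¹, hsA⟩ ?_ hsS
  show ψ (θ * a) * (φ (θ * a))⁻¹ = (ψ θ * (φ θ)⁻¹) * (ψ a * (φ a)⁻¹)
  calc ψ (θ * a) * (φ (θ * a))⁻¹
      = ψ θ * ((ψ a * (φ a)⁻¹) * (φ θ)⁻¹) := by rw [map_mul, map_mul]; group
    _ = ψ θ * ((φ θ)⁻¹ * (ψ a * (φ a)⁻¹)) := by rw [hc hsA (φ θ)⁻¹]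
    _ = (ψ θ * (φ θ)⁻¹) * (ψ a * (φ a)⁻¹) := by group

include hA₂ hφ hψ in
lemma gmap_key (θ η : G₁) (h2 : ψ η * (φ η)⁻¹ ∈ A₂) :
    ψ (θ * η) * (φ (θ * η))⁻¹ = (ψ θ * (φ θ)⁻¹) * (ψ η * (φ η)⁻¹) := by
  have hc : ∀ {x : G₂}, x ∈ A₂ → ∀ g : G₂, g * x = x * g :=
    fun hx g => Subgroup.mem_center_iff.mp (hA₂ hx) g
  calc ψ (θ * η) * (φ (θ * η))⁻¹
      = ψ θ * ((ψ η * (φ η)⁻¹) * (φ θ)⁻¹) := by rw [map_mul, map_mul]; group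
    _ = ψ θ * ((φ θ)⁻¹ * (ψ η * (φ η)⁻¹)) := by rw [hc h2 (φ θ)⁻¹]
    _ = (ψ θ * (φ θ)⁻¹) * (ψ η * (φ η)⁻¹) := by group

lemma gmap_mul (θ η : G₁) (h1 : ψ θ * (φ θ)⁻¹ ∈ A₂) (h2 : ψ η * (φ η)⁻¹ ∈ A₂) :
    gmap hA₂ φ ψ hφ hψ (θ * η) = gmap hA₂ φ ψ hφ hψ θ * gmap hA₂ φ ψ hφ hψ η := by
  have key := gmap_key hA₂ φ ψ hφ hψ θ η h2
  have h12 : ψ (θ * η) * (φ (θ * η))⁻¹ ∈ A₂ := key ▸ mul_mem h1 h2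
  rw [gmap_spec hA₂ φ ψ hφ hψ _ h12, gmap_spec hA₂ φ ψ hφ hψ _ h1,
    gmap_spec hA₂ φ ψ hφ hψ _ h2]
  have : (⟨ψ (θ * η) * (φ (θ * η))⁻¹, h12⟩ : ↥A₂) =
      ⟨ψ θ * (φ θ)⁻¹, h1⟩ * ⟨ψ η * (φ η)⁻¹, h2⟩ := Subtype.ext key
  rw [this]
  rfl

end Aux

/-- Let `G₁, G₂` be groups, `A₁ ⊴ G₁`, `A₂` a central subgroup of `G₂`, and
`φ, ψ : G₁ → G₂` homomorphisms with `φ(A₁) ⊆ A₂`, `ψ(A₁) ⊆ A₂` (inducing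
`φ̄, ψ̄ : G₁/A₁ → G₂/A₂`).  Then (i) `z ↦ φ(z)·ψ(z)⁻¹ : A₁ → A₂` is a group homomorphism
with image `S`; (ii) for `α, β ∈ A₂` one has `β = φ(z)·α·ψ(z)⁻¹` for some `z ∈ A₁` iff
`β·α⁻¹ ∈ S`, so the Reidemeister set `𝓡(φ|_{A₁}, ψ|_{A₁})` is the abelian group `A₂/S`;
(iii) the map `δ : Coin(φ̄,ψ̄) → A₂/S`, `δ(θ̄) = (ψ(θ)·φ(θ)⁻¹)·S` (for any preimage `θ` of
`θ̄`), is a well-defined group homomorphism. -/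
theorem central_extension_structure {G₁ G₂ : Type*} [Group G₁] [Group G₂]
    (A₁ : Subgroup G₁) [A₁.Normal] (A₂ : Subgroup G₂) [A₂.Normal]
    (hA₂ : A₂ ≤ Subgroup.center G₂)
    (φ ψ : G₁ →* G₂) (hφ : ∀ a ∈ A₁, φ a ∈ A₂) (hψ : ∀ a ∈ A₁, ψ a ∈ A₂) :
    -- (i): `z ↦ φ(z)·ψ(z)⁻¹` is a homomorphism `A₁ → A₂` (its image being `S = Ssub …`)
    (∀ z w : ↥A₁,
      restrict₂ A₁ A₂ φ hφ (z * w) * (restrict₂ A₁ A₂ ψ hψ (z * w))⁻¹ =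
        (restrict₂ A₁ A₂ φ hφ z * (restrict₂ A₁ A₂ ψ hψ z)⁻¹) *
        (restrict₂ A₁ A₂ φ hφ w * (restrict₂ A₁ A₂ ψ hψ w)⁻¹)) ∧
    -- (ii): twisted conjugacy over `A₁` is translation by `S` …
    (∀ α β : ↥A₂,
      (∃ z : ↥A₁, (β : G₂) = φ ↑z * ↑α * (ψ (↑z : G₁))⁻¹) ↔
        β * α⁻¹ ∈ Ssub hA₂ φ ψ hφ hψ) ∧
    -- … so `𝓡(φ|_{A₁}, ψ|_{A₁})` is (in bijection with) the group `A₂/S`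
    (∃ e : Quot (tcRel (restrict₂ A₁ A₂ φ hφ) (restrict₂ A₁ A₂ ψ hψ)) ≃
        (↥A₂ ⧸ Ssub hA₂ φ ψ hφ hψ),
      ∀ α : ↥A₂, e (Quot.mk _ α) = QuotientGroup.mk α) ∧
    -- (iii): `δ` is a well-defined group homomorphism
    (∃ δ : ↥((barMap A₁ A₂ φ hφ).eqLocus (barMap A₁ A₂ ψ hψ)) →*
        (↥A₂ ⧸ Ssub hA₂ φ ψ hφ hψ),
      ∀ (θ : G₁) (h : QuotientGroup.mk θ ∈ (barMap A₁ A₂ φ hφ).eqLocus (barMap A₁ A₂ ψ hψ))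
        (hm : ψ θ * (φ θ)⁻¹ ∈ A₂),
        δ ⟨QuotientGroup.mk θ, h⟩ = QuotientGroup.mk (⟨ψ θ * (φ θ)⁻¹, hm⟩ : ↥A₂)) := by
  have hc : ∀ {a : G₂}, a ∈ A₂ → ∀ g : G₂, g * a = a * g :=
    fun ha g => Subgroup.mem_center_iff.mp (hA₂ ha) g
  -- the twisted-conjugacy criterion in the subtype
  have key : ∀ α β : ↥A₂,
      tcRel (restrict₂ A₁ A₂ φ hφ) (restrict₂ A₁ A₂ ψ hψ) α β ↔
        α⁻¹ * β ∈ Ssub hA₂ φ ψ hφ hψ := by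
    intro α β
    have hab : β * α⁻¹ = α⁻¹ * β := Subtype.ext (hc (α⁻¹ : ↥A₂).2 ↑β)
    rw [← hab, ← tc_iff_aux hA₂ φ ψ hφ hψ α β]
    constructor
    · rintro ⟨z, hz⟩
      exact ⟨z, congrArg Subtype.val hz⟩
    · rintro ⟨z, hz⟩
      exact ⟨z, Subtype.ext hz⟩
  refine ⟨dmap_mul hA₂ φ ψ hφ hψ, tc_iff_aux hA₂ φ ψ hφ hψ, ?_, ?_⟩
  · -- the bijection e
    refine ⟨⟨Quot.lift QuotientGroup.mk ?_,
      fun q => Quotient.liftOn' q (Quot.mk _) ?_, ?_, ?_⟩, fun α => rfl⟩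
    · intro α β hαβ
      exact (QuotientGroup.eq).mpr ((key α β).mp hαβ)
    · intro α β hαβ
      exact Quot.sound ((key α β).mpr (QuotientGroup.leftRel_apply.mp hαβ))
    · intro q
      induction q using Quot.ind with
      | _ α => rfl
    · intro q
      induction q using Quotient.inductionOn' with
      | h α => rfl
  · -- the homomorphism δ
    have hg : ∀ a b : G₁, @Setoid.r _ (QuotientGroup.leftRel A₁) a b →
        gmap hA₂ φ ψ hφ hψ a = gmap hA₂ φ ψ hφ hψ b := by
      intro a b hab
      rw [QuotientGroup.leftRel_apply] at hab
      have hb : b = a * (a⁻¹ * b) := by group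
      rw [hb, gmap_mul_mem hA₂ φ ψ hφ hψ a _ hab]
    have cond_of_mem : ∀ θ : G₁,
        (QuotientGroup.mk θ : G₁ ⧸ A₁) ∈
          (barMap A₁ A₂ φ hφ).eqLocus (barMap A₁ A₂ ψ hψ) →
        ψ θ * (φ θ)⁻¹ ∈ A₂ := by
      intro θ hθ
      have h1 : (QuotientGroup.mk (φ θ) : G₂ ⧸ A₂) = QuotientGroup.mk (ψ θ) := hθ
      have h2 : (φ θ)⁻¹ * ψ θ ∈ A₂ := (QuotientGroup.eq).mp h1
      have : ψ θ * (φ θ)⁻¹ = φ θ * ((φ θ)⁻¹ * ψ θ) * (φ θ)⁻¹ := by group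
      rw [this]
      exact Subgroup.Normal.conj_mem inferInstance _ h2 (φ θ)
    let δ' : G₁ ⧸ A₁ → ↥A₂ ⧸ Ssub hA₂ φ ψ hφ hψ :=
      fun q => Quotient.liftOn' q (gmap hA₂ φ ψ hφ hψ) hg
    have δ'_mk : ∀ θ : G₁, δ' (QuotientGroup.mk θ) = gmap hA₂ φ ψ hφ hψ θ :=
      fun θ => rfl
    refine ⟨MonoidHom.mk' (fun x => δ' x.val) ?_, ?_⟩
    · rintro ⟨x, hx⟩ ⟨y, hy⟩
      obtain ⟨θ, rfl⟩ := QuotientGroup.mk_surjective x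
      obtain ⟨η, rfl⟩ := QuotientGroup.mk_surjective y
      have hxy : (⟨QuotientGroup.mk θ, hx⟩ *
          ⟨QuotientGroup.mk η, hy⟩ : ↥((barMap A₁ A₂ φ hφ).eqLocus
            (barMap A₁ A₂ ψ hψ))).val = QuotientGroup.mk (θ * η) := rfl
      show δ' (QuotientGroup.mk (θ * η)) =
        δ' (QuotientGroup.mk θ) * δ' (QuotientGroup.mk η)
      rw [δ'_mk, δ'_mk, δ'_mk]
      exact gmap_mul hA₂ φ ψ hφ hψ θ η (cond_of_mem θ hx) (cond_of_mem η hy)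
    · intro θ h hm
      show δ' (QuotientGroup.mk θ) = _
      rw [δ'_mk]
      exact gmap_spec hA₂ φ ψ hφ hψ θ hm
end

section
/- Let G₁, G₂ be groups, A₁ a normal subgroup of G₁, A₂ a subgroup of the center of G₂, and φ, ψ : G₁ → G₂ homomorphisms with φ(A₁) ⊆ A₂ and ψ(A₁) ⊆ A₂. Let S = {φ(z)·ψ(z)⁻¹ : z ∈ A₁} ⊆ A₂ (a subgroup), let δ : Coin(φ̄, ψ̄) → A₂/S be the homomorphism δ(θ̄) = (ψ(θ)·φ(θ)⁻¹)·S on Coin(φ̄, ψ̄) = {x ∈ G₁/A₁ : φ̄(x) = ψ̄(x)}, and let î₂ : A₂/S → 𝓡(φ, ψ) be the map sending the coset α·S (α ∈ A₂) to the twisted conjugacy class of α with respect to (φ, ψ). Then î₂ is well-defined, and for all α, β ∈ A₂ one has î₂(α·S) = î₂(β·S) if and only if (β·α⁻¹)·S ∈ Im δ; consequently î₂ induces an injection of the quotient group (A₂/S)/Im δ into 𝓡(φ, ψ), which is a bijection onto the image of î₂. -/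
lemma tcRel_equivalence {G H : Type*} [Group G] [Group H] (φ ψ : G →* H) :
    Equivalence (tcRel φ ψ) := by
  constructor
  · intro a; exact ⟨1, by simp⟩
  · rintro a b ⟨z, rfl⟩
    exact ⟨z⁻¹, by simp [mul_assoc]⟩
  · rintro a b c ⟨z, rfl⟩ ⟨w, rfl⟩
    exact ⟨w * z, by simp [mul_assoc]⟩

/-- Let `G₁, G₂` be groups, `A₁ ⊴ G₁`, `A₂` a central subgroup of `G₂`, `φ, ψ : G₁ → G₂`
homomorphisms with `φ(A₁) ⊆ A₂`, `ψ(A₁) ⊆ A₂`, `S = {φ(z)·ψ(z)⁻¹ : z ∈ A₁}` (a subgroup of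
`A₂`), and `δ : Coin(φ̄,ψ̄) → A₂/S` the homomorphism `δ(θ̄) = (ψ(θ)·φ(θ)⁻¹)·S`.  Then the
map `î₂ : A₂/S → 𝓡(φ,ψ)` sending the coset of `α ∈ A₂` to the twisted conjugacy class of
`α` is well defined; `î₂(α·S) = î₂(β·S)` iff `(β·α⁻¹)·S ∈ Im δ`; and consequently `î₂`
induces an injection of `(A₂/S)/Im δ` into `𝓡(φ,ψ)` which is a bijection onto the image of
`î₂`. -/
theorem i2_well_defined_fibers {G₁ G₂ : Type*} [Group G₁] [Group G₂]
    (A₁ : Subgroup G₁) [A₁.Normal] (A₂ : Subgroup G₂) [A₂.Normal]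
    (hA₂ : A₂ ≤ Subgroup.center G₂)
    (φ ψ : G₁ →* G₂) (hφ : ∀ a ∈ A₁, φ a ∈ A₂) (hψ : ∀ a ∈ A₁, ψ a ∈ A₂)
    (δ : ↥((barMap A₁ A₂ φ hφ).eqLocus (barMap A₁ A₂ ψ hψ)) →*
      (↥A₂ ⧸ Ssub hA₂ φ ψ hφ hψ))
    (hδ : ∀ (θ : G₁)
      (h : QuotientGroup.mk θ ∈ (barMap A₁ A₂ φ hφ).eqLocus (barMap A₁ A₂ ψ hψ))
      (hm : ψ θ * (φ θ)⁻¹ ∈ A₂),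
      δ ⟨QuotientGroup.mk θ, h⟩ = QuotientGroup.mk (⟨ψ θ * (φ θ)⁻¹, hm⟩ : ↥A₂)) :
    ∃ i₂ : (↥A₂ ⧸ Ssub hA₂ φ ψ hφ hψ) → Quot (tcRel φ ψ),
      (∀ α : ↥A₂, i₂ (QuotientGroup.mk α) = Quot.mk _ (α : G₂)) ∧
      (∀ α β : ↥A₂,
        i₂ (QuotientGroup.mk α) = i₂ (QuotientGroup.mk β) ↔
          QuotientGroup.mk (β * α⁻¹) ∈ δ.range) ∧
      ∃ j : ((↥A₂ ⧸ Ssub hA₂ φ ψ hφ hψ) ⧸ δ.range) → Quot (tcRel φ ψ),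
        Function.Injective j ∧
        (∀ x : ↥A₂ ⧸ Ssub hA₂ φ ψ hφ hψ, j (QuotientGroup.mk x) = i₂ x) ∧
        Set.range j = Set.range i₂ := by
  classical
  have hcen : ∀ c : G₂, c ∈ A₂ → ∀ g : G₂, g * c = c * g :=
    fun c hc g => Subgroup.mem_center_iff.mp (hA₂ hc) g
  have comm_sub : ∀ a b : ↥A₂, a * b = b * a :=
    fun a b => Subtype.ext (hcen _ b.2 ↑a)
  -- twisted conjugacy between central elements, restated
  have tc_iff : ∀ α β : ↥A₂, tcRel φ ψ (α : G₂) (β : G₂) ↔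
      ∃ z : G₁, ((β * α⁻¹ : ↥A₂) : G₂) = φ z * (ψ z)⁻¹ := by
    intro α β
    constructor
    · rintro ⟨z, hz⟩
      refine ⟨z, ?_⟩
      push_cast
      rw [hz]
      have h := hcen _ α.2 ((ψ z)⁻¹)  -- (ψ z)⁻¹ * α = α * (ψ z)⁻¹
      calc φ z * ↑α * (ψ z)⁻¹ * (↑α)⁻¹
          = φ z * (↑α * (ψ z)⁻¹) * (↑α)⁻¹ := by group
        _ = φ z * ((ψ z)⁻¹ * ↑α) * (↑α)⁻¹ := by rw [h]
        _ = φ z * (ψ z)⁻¹ := by group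
    · rintro ⟨z, hz⟩
      refine ⟨z, ?_⟩
      push_cast at hz
      have h := hcen _ α.2 ((ψ z)⁻¹)
      calc (β : G₂) = ↑β * (↑α)⁻¹ * ↑α := by group
        _ = φ z * (ψ z)⁻¹ * ↑α := by rw [hz]
        _ = φ z * ((ψ z)⁻¹ * ↑α) := by group
        _ = φ z * (↑α * (ψ z)⁻¹) := by rw [← h]
        _ = φ z * ↑α * (ψ z)⁻¹ := by group
  -- the key fiber description
  have key : ∀ γ : ↥A₂, (∃ z : G₁, (γ : G₂) = φ z * (ψ z)⁻¹) ↔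
      (QuotientGroup.mk γ : ↥A₂ ⧸ Ssub hA₂ φ ψ hφ hψ) ∈ δ.range := by
    intro γ
    constructor
    · rintro ⟨z, hz⟩
      have hm' : ψ z * (φ z)⁻¹ ∈ A₂ := by
        have h1 : ψ z * (φ z)⁻¹ = ((γ : G₂))⁻¹ := by rw [hz]; group
        rw [h1]; exact A₂.inv_mem γ.2
      have hmemA : (φ z)⁻¹ * ψ z ∈ A₂ := by
        have h2 := ‹A₂.Normal›.conj_mem _ hm' (φ z)⁻¹
        have h3 : (φ z)⁻¹ * (ψ z * (φ z)⁻¹) * ((φ z)⁻¹)⁻¹ = (φ z)⁻¹ * ψ z := by group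
        rwa [h3] at h2
      have hco : QuotientGroup.mk z ∈ (barMap A₁ A₂ φ hφ).eqLocus (barMap A₁ A₂ ψ hψ) := by
        show barMap A₁ A₂ φ hφ (QuotientGroup.mk z) = barMap A₁ A₂ ψ hψ (QuotientGroup.mk z)
        simp only [barMap, QuotientGroup.map_mk]
        show (QuotientGroup.mk (φ z) : G₂ ⧸ A₂) = QuotientGroup.mk (ψ z)
        rw [QuotientGroup.eq]
        exact hmemA
      refine ⟨(⟨QuotientGroup.mk z, hco⟩ :
        ↥((barMap A₁ A₂ φ hφ).eqLocus (barMap A₁ A₂ ψ hψ)))⁻¹, ?_⟩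
      rw [map_inv, hδ z hco hm', ← QuotientGroup.mk_inv]
      congr 1
      apply Subtype.ext
      show (ψ z * (φ z)⁻¹)⁻¹ = (γ : G₂)
      rw [hz]; group
    · rintro ⟨x, hx⟩
      obtain ⟨θ, hθ⟩ := QuotientGroup.mk_surjective (x : G₁ ⧸ A₁)
      have hco : QuotientGroup.mk θ ∈ (barMap A₁ A₂ φ hφ).eqLocus (barMap A₁ A₂ ψ hψ) := by
        rw [hθ]; exact x.2
      have hxeq : x = ⟨QuotientGroup.mk θ, hco⟩ := Subtype.ext hθ.symm
      have hmemA : (φ θ)⁻¹ * ψ θ ∈ A₂ := by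
        have h : barMap A₁ A₂ φ hφ (QuotientGroup.mk θ) =
            barMap A₁ A₂ ψ hψ (QuotientGroup.mk θ) := hco
        simp only [barMap, QuotientGroup.map_mk] at h
        change (QuotientGroup.mk (φ θ) : G₂ ⧸ A₂) = QuotientGroup.mk (ψ θ) at h
        rw [QuotientGroup.eq] at h
        exact h
      have hm : ψ θ * (φ θ)⁻¹ ∈ A₂ := by
        have h2 := ‹A₂.Normal›.conj_mem _ hmemA (φ θ)
        have h3 : φ θ * ((φ θ)⁻¹ * ψ θ) * (φ θ)⁻¹ = ψ θ * (φ θ)⁻¹ := by group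
        rwa [h3] at h2
      rw [hxeq, hδ θ hco hm] at hx
      have hS := (QuotientGroup.eq).mp hx
      obtain ⟨w, hw⟩ := hS
      have hw' : φ (↑w : G₁) * (ψ (↑w : G₁))⁻¹ =
          (ψ θ * (φ θ)⁻¹)⁻¹ * (γ : G₂) := by
        have h := congrArg (Subtype.val) hw
        simp [restrict₂] at h
        rw [mul_inv_rev, inv_inv]
        exact h
      have hg : (γ : G₂) = (ψ θ * (φ θ)⁻¹) * (φ (↑w : G₁) * (ψ (↑w : G₁))⁻¹) := by
        rw [hw']; group
      have h1 : ψ θ * (φ θ)⁻¹ = (φ θ)⁻¹ * ψ θ := by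
        have h := hcen _ hmemA (φ θ)
        calc ψ θ * (φ θ)⁻¹ = (φ θ * ((φ θ)⁻¹ * ψ θ)) * (φ θ)⁻¹ := by group
          _ = (((φ θ)⁻¹ * ψ θ) * φ θ) * (φ θ)⁻¹ := by rw [h]
          _ = (φ θ)⁻¹ * ψ θ := by group
      have h2 := hcen _ hmemA (φ (↑w : G₁))
      refine ⟨(↑w : G₁) * θ⁻¹, ?_⟩
      calc (γ : G₂) = (ψ θ * (φ θ)⁻¹) * (φ (↑w : G₁) * (ψ (↑w : G₁))⁻¹) := hg
        _ = ((φ θ)⁻¹ * ψ θ) * (φ (↑w : G₁) * (ψ (↑w : G₁))⁻¹) := by rw [h1]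
        _ = φ (↑w : G₁) * ((φ θ)⁻¹ * ψ θ) * (ψ (↑w : G₁))⁻¹ := by rw [h2]; group
        _ = φ ((↑w : G₁) * θ⁻¹) * (ψ ((↑w : G₁) * θ⁻¹))⁻¹ := by
            rw [map_mul, map_mul, map_inv, map_inv, mul_inv_rev, inv_inv]; group
  -- equality in the quotient of tcRel
  have quot_iff : ∀ a b : G₂,
      (Quot.mk (tcRel φ ψ) a = Quot.mk (tcRel φ ψ) b) ↔ tcRel φ ψ a b :=
    fun a b => Quot.eq.trans ((tcRel_equivalence φ ψ).eqvGen_iff)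
  -- well-definedness of i₂
  have hwd : ∀ a b : ↥A₂, QuotientGroup.leftRel (Ssub hA₂ φ ψ hφ hψ) a b →
      Quot.mk (tcRel φ ψ) (a : G₂) = Quot.mk (tcRel φ ψ) (b : G₂) := by
    intro a b hab
    rw [QuotientGroup.leftRel_apply] at hab
    obtain ⟨w, hw⟩ := hab
    apply Quot.sound
    rw [tc_iff]
    refine ⟨↑w, ?_⟩
    have hw' : φ (↑w : G₁) * (ψ (↑w : G₁))⁻¹ = (a : G₂)⁻¹ * (b : G₂) := by
      have h := congrArg (Subtype.val) hw
      simp [restrict₂] at h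
      exact h
    have hab' : (b * a⁻¹ : ↥A₂) = a⁻¹ * b := comm_sub b a⁻¹
    rw [hab']
    push_cast
    rw [hw']
  let i₂ : (↥A₂ ⧸ Ssub hA₂ φ ψ hφ hψ) → Quot (tcRel φ ψ) :=
    fun x => Quotient.liftOn' x (fun a => Quot.mk (tcRel φ ψ) (a : G₂)) hwd
  have hi₂ : ∀ α : ↥A₂, i₂ (QuotientGroup.mk α) = Quot.mk (tcRel φ ψ) (α : G₂) :=
    fun α => rfl
  have main_iff : ∀ α β : ↥A₂,
      i₂ (QuotientGroup.mk α) = i₂ (QuotientGroup.mk β) ↔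
        QuotientGroup.mk (β * α⁻¹) ∈ δ.range := by
    intro α β
    rw [hi₂, hi₂]
    exact (quot_iff _ _).trans ((tc_iff α β).trans (key (β * α⁻¹)))
  -- the mk-coset computation
  have mk_comm : ∀ a b : ↥A₂,
      ((QuotientGroup.mk a : ↥A₂ ⧸ Ssub hA₂ φ ψ hφ hψ))⁻¹ * QuotientGroup.mk b =
        QuotientGroup.mk (b * a⁻¹) := by
    intro a b
    rw [← QuotientGroup.mk_inv, ← QuotientGroup.mk_mul]
    congr 1
    exact comm_sub a⁻¹ b
  have hwd2 : ∀ x y : ↥A₂ ⧸ Ssub hA₂ φ ψ hφ hψ,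
      QuotientGroup.leftRel δ.range x y → i₂ x = i₂ y := by
    intro x y
    obtain ⟨a, rfl⟩ := QuotientGroup.mk_surjective x
    obtain ⟨b, rfl⟩ := QuotientGroup.mk_surjective y
    intro h
    rw [QuotientGroup.leftRel_apply, mk_comm] at h
    exact (main_iff a b).mpr h
  let j : ((↥A₂ ⧸ Ssub hA₂ φ ψ hφ hψ) ⧸ δ.range) → Quot (tcRel φ ψ) :=
    fun x => Quotient.liftOn' x i₂ hwd2
  have hj : ∀ x : ↥A₂ ⧸ Ssub hA₂ φ ψ hφ hψ, j (QuotientGroup.mk x) = i₂ x :=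
    fun x => rfl
  refine ⟨i₂, hi₂, main_iff, j, ?_, hj, ?_⟩
  · intro x y hxy
    obtain ⟨p, rfl⟩ := QuotientGroup.mk_surjective x
    obtain ⟨q, rfl⟩ := QuotientGroup.mk_surjective y
    obtain ⟨a, rfl⟩ := QuotientGroup.mk_surjective p
    obtain ⟨b, rfl⟩ := QuotientGroup.mk_surjective q
    rw [hj, hj] at hxy
    rw [QuotientGroup.eq, mk_comm]
    exact (main_iff a b).mp hxy
  · have hcomp : j ∘ (QuotientGroup.mk :
        (↥A₂ ⧸ Ssub hA₂ φ ψ hφ hψ) → _) = i₂ := rfl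
    rw [← QuotientGroup.mk_surjective.range_comp j, hcomp]
end
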